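/- arXiv:2203.13315 — 3 statements merged into one kernel-verified Lean document; each statement's English description precedes it below -/
import Mathlib

section
/- Let X be a Tychonoff space and let f be a continuous real-valued function on X such that cl_X(X \ Z(f)) is hard in X but f is unbounded. Then X contains a C-embedded copy of the discrete space ℕ that is hard in X. -/
open Set Topology

noncomputable section

/-- The Hewitt realcompactification of `X`, as a subset of the Stone–Čech compactification
`βX`: the set of points `p ∈ βX` such that every continuous real-valued function on `X`
extends continuously, with real values, to the subspace `X ∪ {p}` of `βX`. -/
def hewittSet (X : Type*) [TopologicalSpace X] : Set (StoneCech X) :=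
  {p | ∀ f : C(X, ℝ),
    ∃ g : C(((insert p (Set.range (stoneCechUnit : X → StoneCech X))) : Set (StoneCech X)), ℝ),
      ∀ x : X, g ⟨stoneCechUnit x, Set.mem_insert_of_mem _ ⟨x, rfl⟩⟩ = f x}

/-- `K = cl_{βX}(υX \ X)`. -/
def KSet (X : Type*) [TopologicalSpace X] : Set (StoneCech X) :=
  closure (hewittSet X \ Set.range (stoneCechUnit : X → StoneCech X))

/-- `X` is nearly pseudocompact if `υX \ X` is dense in `βX \ X`. -/
def NearlyPseudocompact (X : Type*) [TopologicalSpace X] : Prop :=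
  ∀ p : StoneCech X, p ∉ Set.range (stoneCechUnit : X → StoneCech X) →
    p ∈ closure (hewittSet X \ Set.range (stoneCechUnit : X → StoneCech X))

/-- A subset `H` of `X` is hard in `X` if (its copy in `βX`) is closed in the subspace
`X ∪ K` of `βX`, i.e. `cl_{βX}(H) ∩ (X ∪ K) ⊆ H`. -/
def IsHard {X : Type*} [TopologicalSpace X] (H : Set X) : Prop :=
  closure (stoneCechUnit '' H) ∩ (Set.range (stoneCechUnit : X → StoneCech X) ∪ KSet X)
    ⊆ stoneCechUnit '' H

/-- A subset `S` of `X` is C-embedded in `X` if every continuous real-valued function on `S`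
extends to a continuous real-valued function on `X`. -/
def CEmbedded {X : Type*} [TopologicalSpace X] (S : Set X) : Prop :=
  ∀ f : C(S, ℝ), ∃ g : C(X, ℝ), ∀ x : S, g x = f x

/-!
Choose points `xₙ` with `|f xₙ₊₁| > |f xₙ| + 1`. The values `|f xₙ|` are `1`-separated, so
`n ↦ |f xₙ|` is a closed embedding of `ℕ` into `ℝ`, hence so is `n ↦ xₙ` into `X`. Every
function on `S = {xₙ}` factors through `|f|`, so Tietze extension in `ℝ` makes `S` C-embedded.
Since `f` vanishes nowhere on `S`, the set `S` is a closed subset of the hard set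
`cl_X(X \ Z(f))`; closed subsets of hard sets are hard because `X` carries the subspace topology
of `βX`.
-/

open Function

lemma exists_seq_pos_pairwise_one_le_dist {α : Type*} {u : α → ℝ}
    (hu : ∀ B, ∃ x, B < u x) :
    ∃ v : ℕ → α, (∀ n, 0 < u (v n)) ∧
      Pairwise fun m n => 1 ≤ dist (u (v m)) (u (v n)) := by
  choose w hw using hu
  let v : ℕ → α := fun n => Nat.rec (w 0) (fun _ x => w (u x + 1)) n
  have hstep : ∀ n, u (v n) + 1 < u (v (n + 1)) := fun n => hw _
  have hmono : StrictMono (u ∘ v) := 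
    strictMono_nat_of_lt_succ fun n => (lt_add_one _).trans (hstep n)
  have hgap {m n : ℕ} (hmn : m < n) : 1 ≤ dist (u (v n)) (u (v m)) := by
    have : u (v m) + 1 ≤ u (v n) := (hstep m).le.trans (hmono.monotone hmn)
    rw [Real.dist_eq]
    linarith [le_abs_self (u (v n) - u (v m))]
  refine ⟨v, fun n => (hw 0).trans_le (hmono.monotone n.zero_le), fun m n hmn => ?_⟩
  rcases hmn.lt_or_gt with hmn | hmn
  · exact dist_comm (u (v m)) _ ▸ hgap hmn
  · exact hgap hmn

lemma Topology.IsClosedEmbedding.of_comp_of_t2 {X Y Z : Type*} [TopologicalSpace X]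
    [TopologicalSpace Y] [TopologicalSpace Z] [T2Space Y] {f : X → Y} {g : Y → Z}
    (hf : Continuous f) (hg : Continuous g) (hgf : IsClosedEmbedding (g ∘ f)) :
    IsClosedEmbedding f :=
  .of_continuous_injective_isClosedMap hf hgf.injective.of_comp
    (isProperMap_of_comp_of_t2 hf hg hgf.isProperMap).isClosedMap

lemma cEmbedded_range_of_isClosedEmbedding_comp {α X Y : Type*} [TopologicalSpace α]
    [TopologicalSpace X] [TopologicalSpace Y] [NormalSpace Y] {v : α → X} (hv : Continuous v)
    (u : C(X, Y)) (huv : IsClosedEmbedding (u ∘ v)) : CEmbedded (range v) := by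
  intro h
  obtain ⟨g, hg⟩ :=
    (h.comp ⟨rangeFactorization v, hv.rangeFactorization⟩).exists_extension' huv
  refine ⟨g.comp u, ?_⟩
  rintro ⟨_, a, rfl⟩
  exact congrFun hg a

lemma IsHard.of_isClosed_subset {X : Type*} [TopologicalSpace X] [CompletelyRegularSpace X]
    {H S : Set X} (hH : IsHard H) (hS : IsClosed S) (hSH : S ⊆ H) : IsHard S := by
  rintro p ⟨hpS, hpXK⟩
  obtain ⟨y, -, rfl⟩ := hH ⟨closure_mono (image_mono hSH) hpS, hpXK⟩
  have hyS : y ∈ closure S := by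
    rw [isInducing_stoneCechUnit.closure_eq_preimage_closure_image]
    exact hpS
  exact mem_image_of_mem _ (hS.closure_eq ▸ hyS)

/-- If `f` is a continuous real-valued function on a Tychonoff space `X` such that
`cl_X(X \ Z(f))` is hard in `X` but `f` is unbounded, then `X` contains a C-embedded copy of
the discrete space `ℕ` that is hard in `X`. -/
theorem exists_hard_CEmbedded_copy_of_nat_of_unbounded
    (X : Type*) [TopologicalSpace X] [T35Space X] (f : C(X, ℝ))
    (hhard : IsHard (closure {x | f x ≠ 0}))
    (hunb : ¬ ∃ B : ℝ, ∀ x : X, |f x| ≤ B) :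
    ∃ S : Set X, S.Countable ∧ S.Infinite ∧ DiscreteTopology S ∧
      CEmbedded S ∧ IsHard S := by
  push Not at hunb
  let u : C(X, ℝ) := ⟨fun x => |f x|, f.continuous.abs⟩
  obtain ⟨v, hpos, hsep⟩ := exists_seq_pos_pairwise_one_le_dist (u := u) hunb
  have huv : IsClosedEmbedding (u ∘ v) :=
    Metric.isClosedEmbedding_of_pairwise_le_dist one_pos hsep
  have hv : IsClosedEmbedding v := .of_comp_of_t2 continuous_of_discreteTopology u.continuous huv
  refine ⟨range v, countable_range v, infinite_range_of_injective hv.injective,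
    hv.isInducing.isDiscrete_range.to_subtype,
    cEmbedded_range_of_isClosedEmbedding_comp hv.continuous u huv,
    hhard.of_isClosed_subset hv.isClosed_range ?_⟩
  rintro _ ⟨n, rfl⟩
  exact subset_closure (abs_pos.1 (hpos n))
end
end

section
/- For a Tychonoff space X, the following are equivalent: (1) X is nearly pseudocompact; (2) every subset of X that is hard in X is compact; (3) every regular closed subset of X that is hard in X is compact. -/
open Set Topology

noncomputable section

/-!
Nearly pseudocompactness says exactly that `X ∪ K = βX`, so a hard set is closed in
`βX`, hence compact. Conversely, if some `p ∈ βX` lies outside `X ∪ K`, choose an open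
`U ∋ p` with `cl U` disjoint from `K`. The regular closed set `H = cl_X (X ∩ U)` is hard, since
its closure in `βX` stays inside `cl U`; but it is not compact, for otherwise its image would be
closed in `βX` and, `X` being dense, would contain `U ∋ p`.
-/

lemma IsOpen.closure_eq_closure_interior_closure {Y : Type*} [TopologicalSpace Y] {V : Set Y}
    (hV : IsOpen V) : closure V = closure (interior (closure V)) := by
  rw [← hV.interior_eq, closure_interior_idem]

lemma DenseRange.subset_image_closure_preimage_of_isCompact {Y Z : Type*}
    [TopologicalSpace Y] [TopologicalSpace Z] [T2Space Z] {f : Y → Z}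
    (hf : DenseRange f) (hfc : Continuous f) {U : Set Z} (hU : IsOpen U)
    (hc : IsCompact (closure (f ⁻¹' U))) : U ⊆ f '' closure (f ⁻¹' U) :=
  calc U ⊆ closure (f '' (f ⁻¹' U)) := hf.subset_closure_image_preimage_of_isOpen hU
    _ ⊆ closure (f '' closure (f ⁻¹' U)) := closure_mono (image_mono subset_closure)
    _ = f '' closure (f ⁻¹' U) := (hc.image hfc).isClosed.closure_eq

section

variable {X : Type*} [TopologicalSpace X]

lemma NearlyPseudocompact.range_union_kSet_eq_univ (hX : NearlyPseudocompact X) :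
    range stoneCechUnit ∪ KSet X = univ :=
  eq_univ_of_forall fun p => or_iff_not_imp_left.mpr (hX p)

lemma IsHard.isClosed_image (hX : NearlyPseudocompact X) {H : Set X} (hH : IsHard H) :
    IsClosed (stoneCechUnit '' H) := by
  refine closure_subset_iff_isClosed.mp fun q hq => hH ⟨hq, ?_⟩
  rw [hX.range_union_kSet_eq_univ]
  exact mem_univ q

lemma IsHard.isCompact [CompletelyRegularSpace X] (hX : NearlyPseudocompact X) {H : Set X}
    (hH : IsHard H) : IsCompact H :=
  isInducing_stoneCechUnit.isCompact_iff.mpr (hH.isClosed_image hX).isCompact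

lemma isHard_of_isClosed_of_disjoint [CompletelyRegularSpace X] {H : Set X} (hH : IsClosed H)
    (hK : Disjoint (closure (stoneCechUnit '' H)) (KSet X)) : IsHard H := by
  rintro q ⟨hqH, ⟨x, rfl⟩ | hqK⟩
  · refine mem_image_of_mem _ ?_
    rwa [← hH.closure_eq, isInducing_stoneCechUnit.closure_eq_preimage_closure_image]
  · exact absurd hqK (hK.notMem_of_mem_left hqH)

lemma isHard_closure_preimage [CompletelyRegularSpace X] {U : Set (StoneCech X)}
    (hU : Disjoint (closure U) (KSet X)) : IsHard (closure (stoneCechUnit ⁻¹' U)) := by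
  refine isHard_of_isClosed_of_disjoint isClosed_closure (hU.mono_left ?_)
  refine closure_minimal (image_subset_iff.mpr ?_) isClosed_closure
  exact continuous_stoneCechUnit.closure_preimage_subset U

end

/-- For a Tychonoff space `X`, the following are equivalent: (1) `X` is nearly pseudocompact;
(2) every subset of `X` that is hard in `X` is compact; (3) every regular closed subset of `X`
that is hard in `X` is compact. -/
theorem nearlyPseudocompact_tfae_hard_compact
    (X : Type*) [TopologicalSpace X] [T35Space X] :
    List.TFAE [NearlyPseudocompact X,
      ∀ H : Set X, IsHard H → IsCompact H,
      ∀ H : Set X, H = closure (interior H) → IsHard H → IsCompact H] := by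
  tfae_have 1 → 2 := fun hX _ hH => hH.isCompact hX
  tfae_have 2 → 3 := fun h2 H _ => h2 H
  tfae_have 3 → 1 := by
    intro h3 p hpX
    by_contra hpK
    obtain ⟨U, ⟨hpU, hU⟩, hUK⟩ :=
      (hasBasis_opens_closure p).mem_iff.mp (isClosed_closure.isOpen_compl.mem_nhds hpK)
    have hH : IsCompact (closure (stoneCechUnit ⁻¹' U)) :=
      h3 _ (hU.preimage continuous_stoneCechUnit).closure_eq_closure_interior_closure
        (isHard_closure_preimage (disjoint_compl_left.mono_left hUK))
    obtain ⟨x, -, rfl⟩ := denseRange_stoneCechUnit.subset_image_closure_preimage_of_isCompact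
      continuous_stoneCechUnit hU hH hpU
    exact hpX ⟨x, rfl⟩
  tfae_finish
end
end

section
/- For a Tychonoff space X, υ_χ X = υ_{C_H} X, where υ_A X = {p ∈ βX : f*(p) ∈ ℝ for all f ∈ A}; consequently υ_χ X = X ∪ K with K = cl_{βX}(υX \ X). -/
open Set Topology

noncomputable section

/-- Composing `f : C(X, ℝ)` with a homeomorphism `φ` of `ℝ` onto `(0,1)` and extending the
resulting bounded function continuously to `βX`, with values in `[0,1]`. -/
def starExt {X : Type*} [TopologicalSpace X] (φ : ℝ ≃ₜ (Set.Ioo (0 : ℝ) 1)) (f : C(X, ℝ)) :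
    StoneCech X → Set.Icc (0 : ℝ) 1 :=
  stoneCechExtend
    (Continuous.subtype_mk
      (continuous_subtype_val.comp (φ.continuous.comp f.continuous))
      (fun x => ⟨(φ (f x)).2.1.le, (φ (f x)).2.2.le⟩) :
      Continuous fun x : X =>
        (⟨(φ (f x) : ℝ), ⟨(φ (f x)).2.1.le, (φ (f x)).2.2.le⟩⟩ : Set.Icc (0 : ℝ) 1))

/-- For `f ∈ C(X, ℝ)` and `p ∈ βX`, the statement `f*(p) ∈ ℝ`: composing `f` with a
homeomorphism of `ℝ` onto `(0,1)` and extending the resulting bounded function continuously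
to `βX` (with values in `[0,1]`), the value of this extension at `p` lies in `(0,1)`. -/
def RealAt {X : Type*} [TopologicalSpace X] (f : C(X, ℝ)) (p : StoneCech X) : Prop :=
  ∀ φ : ℝ ≃ₜ (Set.Ioo (0 : ℝ) 1), (starExt φ f p : ℝ) ∈ Set.Ioo (0 : ℝ) 1

/-- `C_H(X)`: the continuous real-valued functions `f` on `X` whose support
`cl_X(X \ Z(f))` is hard in `X`. -/
def CHSet (X : Type*) [TopologicalSpace X] : Set C(X, ℝ) :=
  {f | IsHard (closure {x | f x ≠ 0})}

/-- `υ_A X = {p ∈ βX : f*(p) ∈ ℝ for all f ∈ A}`. -/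
def upsilonOf {X : Type*} [TopologicalSpace X] (A : Set C(X, ℝ)) : Set (StoneCech X) :=
  {p | ∀ f ∈ A, RealAt f p}

/-- `χ(X) = C*(X) + C_H(X)`: the functions of the form `g + h` with `g` bounded and
`h ∈ C_H(X)`. -/
def chiSet (X : Type*) [TopologicalSpace X] : Set C(X, ℝ) :=
  {f | ∃ g h : C(X, ℝ), (∃ B : ℝ, ∀ x : X, |g x| ≤ B) ∧ h ∈ CHSet X ∧ f = g + h}

section AuxLemmas

open Filter

variable {X : Type*} [TopologicalSpace X]

lemma phi0img : (affineHomeomorph (1/2:ℝ) (1/2) (by norm_num)) '' Set.Ioo (-1 : ℝ) 1 = Set.Ioo (0:ℝ) 1 := by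
  ext y
  constructor
  · rintro ⟨x, ⟨h1, h2⟩, rfl⟩
    show (0:ℝ) < 1/2 * x + 1/2 ∧ 1/2 * x + 1/2 < 1
    constructor <;> linarith
  · rintro ⟨h1, h2⟩
    exact ⟨2*y - 1, ⟨by linarith, by linarith⟩, by show (1:ℝ)/2 * _ + 1/2 = y; ring⟩

/-- A homeomorphism between `ℝ` and `(0,1)`. -/
noncomputable def phi0 : ℝ ≃ₜ (Set.Ioo (0:ℝ) 1) :=
  ((orderIsoIooNegOneOne ℝ).toHomeomorph).trans <|
    ((affineHomeomorph (1/2:ℝ) (1/2) (by norm_num)).image (Set.Ioo (-1:ℝ) 1)).trans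
      (Homeomorph.setCongr phi0img)

lemma continuous_starExt (φ : ℝ ≃ₜ (Set.Ioo (0 : ℝ) 1)) (f : C(X, ℝ)) :
    Continuous (starExt φ f) := continuous_stoneCechExtend _

lemma starExt_unit (φ : ℝ ≃ₜ (Set.Ioo (0 : ℝ) 1)) (f : C(X, ℝ)) (x : X) :
    (starExt φ f (stoneCechUnit x) : ℝ) = (φ (f x) : ℝ) := by
  have h := congrFun (stoneCechExtend_extends
    (Continuous.subtype_mk
      (continuous_subtype_val.comp (φ.continuous.comp f.continuous))
      (fun x => ⟨(φ (f x)).2.1.le, (φ (f x)).2.2.le⟩) :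
      Continuous fun x : X =>
        (⟨(φ (f x) : ℝ), ⟨(φ (f x)).2.1.le, (φ (f x)).2.2.le⟩⟩ : Set.Icc (0 : ℝ) 1))) x
  exact congrArg Subtype.val h

lemma neBot_trace (p : StoneCech X) :
    (Filter.comap (stoneCechUnit : X → StoneCech X) (nhds p)).NeBot := by
  rw [Filter.comap_neBot_iff]
  intro t ht
  obtain ⟨y, hyt, x, rfl⟩ := mem_closure_iff_nhds.mp (denseRange_stoneCechUnit p) t ht
  exact ⟨x, hyt⟩

lemma tendsto_starExt (φ : ℝ ≃ₜ (Set.Ioo (0 : ℝ) 1)) (f : C(X, ℝ)) (p : StoneCech X) :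
    Filter.Tendsto (fun x : X => (φ (f x) : ℝ))
      (Filter.comap (stoneCechUnit : X → StoneCech X) (nhds p))
      (nhds ((starExt φ f p : ℝ))) := by
  have h1 : Filter.Tendsto (stoneCechUnit : X → StoneCech X)
      (Filter.comap stoneCechUnit (nhds p)) (nhds p) := Filter.tendsto_comap
  have h2 := ((continuous_subtype_val.comp (continuous_starExt φ f)).tendsto p).comp h1
  exact h2.congr fun x => starExt_unit φ f x

lemma realAt_of_eventually_bounded {f : C(X, ℝ)} {p : StoneCech X} {B : ℝ}
    (hB : ∀ᶠ x in Filter.comap (stoneCechUnit : X → StoneCech X) (nhds p), |f x| ≤ B) :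
    RealAt f p := by
  intro φ
  haveI := neBot_trace p
  have ht := tendsto_starExt φ f p
  have hKc : IsCompact ((fun r : ℝ => (φ r : ℝ)) '' Set.Icc (-B) B) :=
    isCompact_Icc.image (continuous_subtype_val.comp φ.continuous)
  have hmem : ∀ᶠ x in Filter.comap (stoneCechUnit : X → StoneCech X) (nhds p),
      (φ (f x) : ℝ) ∈ (fun r : ℝ => (φ r : ℝ)) '' Set.Icc (-B) B :=
    hB.mono fun x hx => ⟨f x, ⟨(abs_le.mp hx).1, (abs_le.mp hx).2⟩, rfl⟩
  have hlim := hKc.isClosed.mem_of_tendsto ht hmem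
  obtain ⟨r, -, hr⟩ := hlim
  rw [← hr]
  exact (φ r).2

lemma tendsto_abs_atTop_of_not_Ioo {f : C(X, ℝ)} {p : StoneCech X}
    (φ : ℝ ≃ₜ (Set.Ioo (0 : ℝ) 1)) (h : (starExt φ f p : ℝ) ∉ Set.Ioo (0 : ℝ) 1) :
    Filter.Tendsto (fun x => |f x|)
      (Filter.comap (stoneCechUnit : X → StoneCech X) (nhds p)) atTop := by
  rw [Filter.tendsto_atTop]
  intro C
  have ht := tendsto_starExt φ f p
  have hKc : IsCompact ((fun r : ℝ => (φ r : ℝ)) '' Set.Icc (-C) C) :=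
    isCompact_Icc.image (continuous_subtype_val.comp φ.continuous)
  have hnot : (starExt φ f p : ℝ) ∉ (fun r : ℝ => (φ r : ℝ)) '' Set.Icc (-C) C := by
    rintro ⟨r, -, hr⟩
    exact h (hr ▸ (φ r).2)
  have hev := ht.eventually (hKc.isClosed.isOpen_compl.eventually_mem hnot)
  refine hev.mono fun x hx => ?_
  by_contra hC
  exact hx ⟨f x, ⟨(abs_le.mp (le_of_lt (lt_of_not_ge hC))).1,
    (abs_le.mp (le_of_lt (lt_of_not_ge hC))).2⟩, rfl⟩

lemma not_realAt_of_tendsto_abs {f : C(X, ℝ)} {p : StoneCech X}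
    (h : Filter.Tendsto (fun x => |f x|)
      (Filter.comap (stoneCechUnit : X → StoneCech X) (nhds p)) atTop) :
    ¬ RealAt f p := by
  intro hR
  haveI := neBot_trace p
  have h1 : (starExt phi0 f p : ℝ) ∈ Set.Ioo (0 : ℝ) 1 := hR phi0
  have ht := tendsto_starExt phi0 f p
  have hsub : Filter.Tendsto (fun x => phi0 (f x))
      (Filter.comap (stoneCechUnit : X → StoneCech X) (nhds p))
      (nhds (⟨(starExt phi0 f p : ℝ), h1⟩ : Set.Ioo (0:ℝ) 1)) := by
    rw [tendsto_subtype_rng]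
    exact ht
  have hf : Filter.Tendsto (fun x => f x)
      (Filter.comap (stoneCechUnit : X → StoneCech X) (nhds p))
      (nhds (phi0.symm ⟨(starExt phi0 f p : ℝ), h1⟩)) := by
    have := ((phi0.symm.continuous.tendsto _).comp hsub)
    exact this.congr fun x => phi0.symm_apply_apply (f x)
  have habs := (continuous_abs.tendsto _).comp hf
  exact not_tendsto_nhds_of_tendsto_atTop h _ habs

end AuxLemmas

section MainLemmas

open Filter

variable {X : Type*} [TopologicalSpace X]

lemma exists_extension_of_starExt_mem {f : C(X, ℝ)} {p : StoneCech X}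
    (φ : ℝ ≃ₜ (Set.Ioo (0 : ℝ) 1)) (h : (starExt φ f p : ℝ) ∈ Set.Ioo (0 : ℝ) 1) :
    ∃ g : C(((insert p (Set.range (stoneCechUnit : X → StoneCech X))) : Set (StoneCech X)), ℝ),
      ∀ x : X, g ⟨stoneCechUnit x, Set.mem_insert_of_mem _ ⟨x, rfl⟩⟩ = f x := by
  have hmem : ∀ q : ((insert p (Set.range (stoneCechUnit : X → StoneCech X))) : Set (StoneCech X)),
      (starExt φ f q : ℝ) ∈ Set.Ioo (0 : ℝ) 1 := by
    rintro ⟨q, hq⟩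
    rcases hq with rfl | ⟨x, rfl⟩
    · exact h
    · rw [starExt_unit]
      exact (φ (f x)).2
  refine ⟨⟨fun q => φ.symm ⟨(starExt φ f q : ℝ), hmem q⟩, ?_⟩, ?_⟩
  · exact φ.symm.continuous.comp (Continuous.subtype_mk
      ((continuous_subtype_val.comp (continuous_starExt φ f)).comp continuous_subtype_val) _)
  · intro x
    simp only [ContinuousMap.coe_mk]
    have hval : (⟨(starExt φ f (stoneCechUnit x) : ℝ),
        hmem ⟨stoneCechUnit x, Set.mem_insert_of_mem _ ⟨x, rfl⟩⟩⟩ : Set.Ioo (0:ℝ) 1) = φ (f x) :=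
      Subtype.ext (starExt_unit φ f x)
    rw [hval, φ.symm_apply_apply]

lemma mem_image_of_unit_mem_closure [T35Space X] {S : Set X} (hS : IsClosed S) {x : X}
    (hx : stoneCechUnit x ∈ closure (stoneCechUnit '' S)) :
    stoneCechUnit x ∈ stoneCechUnit '' S := by
  by_contra hxS
  have hxnot : x ∉ S := fun h => hxS ⟨x, h, rfl⟩
  obtain ⟨u, hu_cont, hux, huS⟩ := CompletelyRegularSpace.completely_regular x S hS hxnot
  have hUS : stoneCechUnit '' S ⊆ (stoneCechExtend hu_cont) ⁻¹' {(1 : unitInterval)} := by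
    rintro _ ⟨y, hy, rfl⟩
    simp only [Set.mem_preimage, Set.mem_singleton_iff]
    have he : stoneCechExtend hu_cont (stoneCechUnit y) = u y :=
      congrFun (stoneCechExtend_extends hu_cont) y
    rw [he]
    exact huS hy
  have hclosed : IsClosed ((stoneCechExtend hu_cont) ⁻¹' {(1 : unitInterval)}) :=
    isClosed_singleton.preimage (continuous_stoneCechExtend _)
  have hmem := closure_minimal hUS hclosed hx
  have he : stoneCechExtend hu_cont (stoneCechUnit x) = u x :=
    congrFun (stoneCechExtend_extends hu_cont) x
  rw [Set.mem_preimage, Set.mem_singleton_iff, he, hux] at hmem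
  simpa using congrArg Subtype.val hmem

lemma subset_upsilon_chi [T35Space X] :
    Set.range (stoneCechUnit : X → StoneCech X) ∪ KSet X ⊆ upsilonOf (chiSet X) := by
  rintro p hp f ⟨g, h, ⟨B, hB⟩, hH, rfl⟩
  by_cases hpX : p ∈ Set.range (stoneCechUnit : X → StoneCech X)
  · obtain ⟨x, rfl⟩ := hpX
    intro φ
    rw [starExt_unit]
    exact (φ ((g + h) x)).2
  · have hpK : p ∈ KSet X := hp.resolve_left hpX
    have hpS : p ∉ closure (stoneCechUnit '' closure {x | h x ≠ 0}) := by
      intro hmem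
      exact hpX (Set.image_subset_range _ _ (hH ⟨hmem, Or.inr hpK⟩))
    have hev : ∀ᶠ x in Filter.comap (stoneCechUnit : X → StoneCech X) (nhds p),
        stoneCechUnit x ∉ closure (stoneCechUnit '' closure {x | h x ≠ 0}) :=
      Filter.tendsto_comap.eventually (isClosed_closure.isOpen_compl.eventually_mem hpS)
    refine realAt_of_eventually_bounded (B := B) (hev.mono fun x hx => ?_)
    have hx0 : h x = 0 := by
      by_contra hne
      exact hx (subset_closure ⟨x, subset_closure hne, rfl⟩)
    have : (g + h) x = g x := by simp [hx0]
    rw [this]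
    exact hB x

lemma upsilon_CH_subset [T35Space X] :
    upsilonOf (CHSet X) ⊆ Set.range (stoneCechUnit : X → StoneCech X) ∪ KSet X := by
  intro p hp
  by_contra hpn
  obtain ⟨hpX, hpK⟩ := not_or.mp hpn
  have hpH : p ∉ hewittSet X := fun hmem => hpK (subset_closure ⟨hmem, hpX⟩)
  rw [hewittSet, Set.mem_setOf_eq] at hpH
  push_neg at hpH
  obtain ⟨f, hf⟩ := hpH
  have hnot : (starExt phi0 f p : ℝ) ∉ Set.Ioo (0 : ℝ) 1 := by
    intro hIoo
    obtain ⟨g, hg⟩ := exists_extension_of_starExt_mem phi0 hIoo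
    obtain ⟨x, hx⟩ := hf g
    exact hx (hg x)
  haveI := neBot_trace p
  have habs := tendsto_abs_atTop_of_not_Ioo phi0 hnot
  obtain ⟨u, hu0, hu1, -⟩ := exists_continuous_zero_one_of_isClosed
    (isClosed_closure : IsClosed (KSet X)) (isClosed_singleton (x := p))
    (Set.disjoint_singleton_right.mpr hpK)
  set w : StoneCech X → ℝ := fun q => max 0 (2 * u q - 1) with hw
  have hw_cont : Continuous w :=
    continuous_const.max ((continuous_const.mul u.continuous).sub continuous_const)
  set h0 : C(X, ℝ) := ⟨fun x => f x * w (stoneCechUnit x),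
    f.continuous.mul (hw_cont.comp continuous_stoneCechUnit)⟩ with hh0
  -- support of h0 is contained in T := {q | 1/2 ≤ u q}
  have hsubT : closure {x : X | h0 x ≠ 0} ⊆ stoneCechUnit ⁻¹' {q | 1/2 ≤ u q} := by
    apply closure_minimal
    · intro x hx
      simp only [Set.mem_setOf_eq, hh0, ContinuousMap.coe_mk] at hx
      by_contra hle
      simp only [Set.mem_preimage, Set.mem_setOf_eq] at hle
      have hle' : u (stoneCechUnit x) < 1/2 := lt_of_not_ge hle
      have hw0 : w (stoneCechUnit x) = 0 := max_eq_left (by linarith)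
      exact hx (by rw [hw0, mul_zero])
    · exact (isClosed_le continuous_const u.continuous).preimage continuous_stoneCechUnit
  have hTK : ∀ q ∈ KSet X, q ∉ {q | 1/2 ≤ u q} := by
    intro q hq hmem
    have : u q = 0 := hu0 hq
    rw [Set.mem_setOf_eq, this] at hmem
    linarith
  have hclT : closure (stoneCechUnit '' closure {x : X | h0 x ≠ 0}) ⊆ {q | 1/2 ≤ u q} := by
    apply closure_minimal
    · rintro _ ⟨x, hx, rfl⟩
      exact hsubT hx
    · exact isClosed_le continuous_const u.continuous
  have hhard : h0 ∈ CHSet X := by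
    rintro q ⟨hq1, hq2⟩
    rcases hq2 with ⟨x, rfl⟩ | hqK
    · exact mem_image_of_unit_mem_closure isClosed_closure hq1
    · exact absurd (hclT hq1) (hTK q hqK)
  have hwp : w p = 1 := by
    rw [hw]
    show 0 ⊔ (2 * u p - 1) = 1
    rw [hu1 rfl]
    norm_num
  have hwt : Filter.Tendsto (fun x : X => w (stoneCechUnit x))
      (Filter.comap (stoneCechUnit : X → StoneCech X) (nhds p)) (nhds 1) := by
    have hcm : Filter.Tendsto (stoneCechUnit : X → StoneCech X)
        (Filter.comap stoneCechUnit (nhds p)) (nhds p) := Filter.tendsto_comap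
    have := (hw_cont.tendsto p).comp hcm
    rwa [hwp] at this
  have habs0 : Filter.Tendsto (fun x : X => |h0 x|)
      (Filter.comap (stoneCechUnit : X → StoneCech X) (nhds p)) atTop := by
    rw [Filter.tendsto_atTop]
    intro C
    have hev1 : ∀ᶠ x in Filter.comap (stoneCechUnit : X → StoneCech X) (nhds p),
        2 * max C 0 ≤ |f x| := (Filter.tendsto_atTop.mp habs) (2 * max C 0)
    have hev2 : ∀ᶠ x in Filter.comap (stoneCechUnit : X → StoneCech X) (nhds p),
        1/2 ≤ w (stoneCechUnit x) := hwt.eventually (eventually_ge_nhds (by norm_num))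
    filter_upwards [hev1, hev2] with x h1 h2
    have hwnn : (0:ℝ) ≤ w (stoneCechUnit x) := le_trans (by norm_num) h2
    have : |h0 x| = |f x| * w (stoneCechUnit x) := by
      simp only [hh0, ContinuousMap.coe_mk, abs_mul, abs_of_nonneg hwnn]
    rw [this]
    have hCmax : C ≤ max C 0 := le_max_left _ _
    have hfnn : (0:ℝ) ≤ |f x| := abs_nonneg _
    nlinarith [mul_le_mul_of_nonneg_left h2 hfnn]
  exact not_realAt_of_tendsto_abs habs0 (hp h0 hhard)

lemma upsilon_chi_subset_CH : upsilonOf (chiSet X) ⊆ upsilonOf (CHSet X) := by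
  intro p hp f hf
  exact hp f ⟨0, f, ⟨0, by simp⟩, hf, (zero_add f).symm⟩

end MainLemmas

/-- For a Tychonoff space `X`, `υ_χ X = υ_{C_H} X`; consequently `υ_χ X = X ∪ K` with
`K = cl_{βX}(υX \ X)`. -/
theorem upsilon_chi_eq_upsilon_CH
    (X : Type*) [TopologicalSpace X] [T35Space X] :
    upsilonOf (chiSet X) = upsilonOf (CHSet X) ∧
      upsilonOf (chiSet X) = Set.range (stoneCechUnit : X → StoneCech X) ∪ KSet X := by
  have hC := upsilon_chi_subset_CH (X := X)
  have hA := subset_upsilon_chi (X := X)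
  have hB := upsilon_CH_subset (X := X)
  refine ⟨subset_antisymm hC (hB.trans hA), subset_antisymm (hC.trans hB) hA⟩
end
end
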